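/- Every closed additive subgroup H of ℂ ≅ ℝ² is one of: {0}, an infinite cyclic group ℤ·b with b ≠ 0, a line ℝ·b, a set of the form ℤ·b₁ + ℤ·b₂ with b₁, b₂ ℝ-linearly independent (a lattice), ℝ·b₁ + ℤ·b₂ with b₁,b₂ independent, or all of ℂ. In particular, if H is discrete then H = {0}, H = ℤ·b, or H is a lattice ℤ·b₁ + ℤ·b₂ with b₁, b₂ ℝ-linearly independent. -/

import Mathlib

/-!
A discrete subgroup of a finite-dimensional real space is a `ℤ`-lattice in its `ℝ`-span, so it
is spanned over `ℤ` by `ℝ`-linearly independent vectors, of which there are at most two in `ℂ`.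
If `H` is closed but not discrete, it has nonzero elements `xₙ → 0`; a limit `u` of the directions
`xₙ / ‖xₙ‖` spans a line in `H`, because `⌊t / ‖xₙ‖⌋ • xₙ ∈ H` tends to `t • u`. Then `H` is
determined by the closed subgroup `{s : ℝ | s • (I * u) ∈ H}` of `ℝ`, which is `ℝ` or cyclic.
-/

open Filter Topology Set Submodule Complex

theorem AddSubgroup.exists_linearIndependent_span_eq_of_discreteTopology {E : Type*}
    [NormedAddCommGroup E] [NormedSpace ℝ E] [FiniteDimensional ℝ E]
    (H : AddSubgroup E) [hH : DiscreteTopology H] :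
    ∃ (n : ℕ) (v : Fin n → E), LinearIndependent ℝ v ∧ (span ℤ (range v) : Set E) = H := by
  let L := H.toIntSubmodule
  have : DiscreteTopology L := hH
  let b := Module.finBasis ℤ L
  have hspan : span ℤ (range (L.subtype ∘ b)) = L := by
    rw [range_comp, ← map_span, b.span_eq, Submodule.map_top, Submodule.range_subtype]
  have hindep : LinearIndependent ℤ (L.subtype ∘ b) :=
    b.linearIndependent.map' L.subtype L.ker_subtype
  refine ⟨_, L.subtype ∘ b, ?_, by rw [hspan]; rfl⟩
  rwa [linearIndependent_iff_card_eq_finrank_span,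
    Real.finrank_eq_int_finrank_of_discrete (by rwa [hspan]),
    ← linearIndependent_iff_card_eq_finrank_span]

theorem AddSubgroup.exists_ne_zero_norm_lt_of_not_discreteTopology {E : Type*}
    [SeminormedAddCommGroup E] {H : AddSubgroup E} (hH : ¬DiscreteTopology H) {ε : ℝ}
    (hε : 0 < ε) : ∃ x ∈ H, x ≠ 0 ∧ ‖x‖ < ε := by
  contrapose! hH
  refine discreteTopology_of_isOpen_singleton_zero ?_
  convert (Metric.isOpen_ball (x := (0 : E)) (ε := ε)).preimage continuous_subtype_val
  ext ⟨x, hx⟩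
  simp only [mem_singleton_iff, mem_preimage, mem_ball_zero_iff, Subtype.ext_iff]
  exact ⟨fun h => by simpa [h] using hε, fun h => by_contra fun h0 => (hH x hx h0).not_gt h⟩

theorem tendsto_floor_div_mul_self {α : Type*} {l : Filter α} {r : α → ℝ} (hr0 : ∀ a, 0 < r a)
    (hr : Tendsto r l (𝓝 0)) (t : ℝ) : Tendsto (fun a => ⌊t / r a⌋ * r a) l (𝓝 t) := by
  refine tendsto_of_tendsto_of_tendsto_of_le_of_le (by simpa using tendsto_const_nhds.sub hr)
    tendsto_const_nhds (fun a => ?_) (fun a => ?_)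
  · have h := mul_lt_mul_of_pos_right (Int.sub_one_lt_floor (t / r a)) (hr0 a)
    rw [sub_mul, div_mul_cancel₀ t (hr0 a).ne', one_mul] at h
    exact h.le
  · exact (le_div_iff₀ (hr0 a)).1 (Int.floor_le _)

theorem AddSubgroup.exists_forall_smul_mem_of_tendsto_zero {E : Type*} [NormedAddCommGroup E]
    [NormedSpace ℝ E] [ProperSpace E] {H : AddSubgroup E} (hH : IsClosed (H : Set E))
    {x : ℕ → E} (hxH : ∀ n, x n ∈ H) (hx0 : ∀ n, x n ≠ 0) (hx : Tendsto x atTop (𝓝 0)) :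
    ∃ u ≠ 0, ∀ t : ℝ, t • u ∈ H := by
  let u n := ‖x n‖⁻¹ • x n
  have hu : ∀ n, u n ∈ Metric.sphere (0 : E) 1 := fun n => by
    simpa [u] using norm_smul_inv_norm (𝕜 := ℝ) (hx0 n)
  obtain ⟨v, hv, φ, hφ, huv⟩ := (isCompact_sphere (0 : E) 1).tendsto_subseq hu
  refine ⟨v, ne_zero_of_mem_unit_sphere ⟨v, hv⟩, fun t => ?_⟩
  have hr : Tendsto (fun n => ‖x (φ n)‖) atTop (𝓝 0) := by
    simpa using (hx.comp hφ.tendsto_atTop).norm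
  have hlim := (tendsto_floor_div_mul_self (fun n => norm_pos_iff.2 (hx0 (φ n))) hr t).smul huv
  refine hH.mem_of_tendsto hlim (Eventually.of_forall fun n => ?_)
  have : (⌊t / ‖x (φ n)‖⌋ * ‖x (φ n)‖) • u (φ n) = ⌊t / ‖x (φ n)‖⌋ • x (φ n) := by
    simp [u, mul_smul, smul_inv_smul₀ (norm_ne_zero_iff.2 (hx0 (φ n))), Int.cast_smul_eq_zsmul]
  simpa only [Function.comp_apply, this, SetLike.mem_coe] using zsmul_mem (hxH (φ n)) _

theorem AddSubgroup.exists_forall_smul_mem_of_not_discreteTopology {E : Type*}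
    [NormedAddCommGroup E] [NormedSpace ℝ E] [ProperSpace E] {H : AddSubgroup E}
    (hH : IsClosed (H : Set E)) (hd : ¬DiscreteTopology H) :
    ∃ u ≠ 0, ∀ t : ℝ, t • u ∈ H := by
  choose x hxH hx0 hx using fun n : ℕ =>
    exists_ne_zero_norm_lt_of_not_discreteTopology hd (Nat.one_div_pos_of_nat (n := n))
  exact exists_forall_smul_mem_of_tendsto_zero hH hxH hx0
    (squeeze_zero_norm (fun n => (hx n).le) tendsto_one_div_add_atTop_nhds_zero_nat)

theorem AddSubgroup.eq_top_or_eq_zmultiples_of_isClosed (S : AddSubgroup ℝ)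
    (hS : IsClosed (S : Set ℝ)) : S = ⊤ ∨ ∃ a, S = zmultiples a := by
  rcases S.dense_or_cyclic with hd | ⟨a, rfl⟩
  · exact .inl (SetLike.coe_injective (by rw [← hS.closure_eq, hd.closure_eq, coe_top]))
  · exact .inr ⟨a, (zmultiples_eq_closure a).symm⟩

namespace Complex

theorem addSubgroup_eq_zero_or_zmultiples_or_lattice_of_discreteTopology
    (H : AddSubgroup ℂ) [DiscreteTopology H] :
    (H : Set ℂ) = {0} ∨
    (∃ b : ℂ, b ≠ 0 ∧ (H : Set ℂ) = range fun n : ℤ => n • b) ∨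
    (∃ b₁ b₂ : ℂ, LinearIndependent ℝ ![b₁, b₂] ∧
      (H : Set ℂ) = {w : ℂ | ∃ m n : ℤ, w = m • b₁ + n • b₂}) := by
  obtain ⟨n, v, hv, hH⟩ := H.exists_linearIndependent_span_eq_of_discreteTopology
  have hn : n ≤ 2 := by simpa using hv.fintype_card_le_finrank
  rw [← hH]
  interval_cases n
  · left
    simp [range_eq_empty v]
  · right; left
    refine ⟨v 0, hv.ne_zero 0, ?_⟩
    rw [range_unique, span_singleton_eq_range]
    rfl
  · right; right
    refine ⟨v 0, v 1, by rwa [← FinVec.etaExpand_eq v] at hv, ?_⟩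
    have hrange : range v = {v 0, v 1} := by
      rw [← FinVec.etaExpand_eq v]
      exact Matrix.range_cons_cons_empty _ _ _
    ext w
    simp [hrange, mem_span_pair, eq_comm]

theorem eq_re_div_smul_add_im_div_smul {b : ℂ} (hb : b ≠ 0) (z : ℂ) :
    z = (z / b).re • b + (z / b).im • (I * b) := by
  calc z = ((z / b).re + (z / b).im * I) * b := by rw [re_add_im, div_mul_cancel₀ z hb]
    _ = _ := by simp only [real_smul]; ring

theorem linearIndependent_pair_smul_I_mul {b : ℂ} (hb : b ≠ 0) {a : ℝ} (ha : a ≠ 0) :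
    LinearIndependent ℝ ![b, a • (I * b)] := by
  refine (LinearIndependent.pair_iff' hb).2 fun s h => ha ?_
  have := congrArg (fun z => (z / b).im) h
  simpa [real_smul, mul_div_assoc, div_self hb, ← mul_assoc] using this.symm

variable {H : AddSubgroup ℂ} {b : ℂ}

theorem mem_addSubgroup_iff_im_div_smul_mem (hb : b ≠ 0) (hline : ∀ t : ℝ, t • b ∈ H) (z : ℂ) :
    z ∈ H ↔ (z / b).im • (I * b) ∈ H := by
  conv_lhs => rw [eq_re_div_smul_add_im_div_smul hb z]
  exact H.add_mem_cancel_left (hline _)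

theorem addSubgroup_eq_line_or_eq_line_add_zmultiples_or_eq_univ
    (hH : IsClosed (H : Set ℂ)) (hb : b ≠ 0) (hline : ∀ t : ℝ, t • b ∈ H) :
    (∃ b : ℂ, b ≠ 0 ∧ (H : Set ℂ) = range fun r : ℝ => r • b) ∨
    (∃ b₁ b₂ : ℂ, LinearIndependent ℝ ![b₁, b₂] ∧
      (H : Set ℂ) = {w : ℂ | ∃ (r : ℝ) (n : ℤ), w = r • b₁ + n • b₂}) ∨
    (H : Set ℂ) = univ := by
  let S : AddSubgroup ℝ := H.comap (LinearMap.toSpanSingleton ℝ ℂ (I * b)).toAddMonoidHom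
  have hS : IsClosed (S : Set ℝ) := hH.preimage (continuous_id.smul continuous_const)
  have hmem (z : ℂ) : z ∈ H ↔ (z / b).im ∈ S := mem_addSubgroup_iff_im_div_smul_mem hb hline z
  rcases S.eq_top_or_eq_zmultiples_of_isClosed hS with hStop | ⟨a, hSa⟩
  · refine .inr (.inr (eq_univ_of_forall fun z => (hmem z).2 (hStop ▸ AddSubgroup.mem_top _)))
  rcases eq_or_ne a 0 with rfl | ha
  · refine .inl ⟨b, hb, Set.ext fun z => ?_⟩
    rw [SetLike.mem_coe, hmem, hSa, AddSubgroup.zmultiples_zero_eq_bot, AddSubgroup.mem_bot]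
    constructor
    · intro him
      exact ⟨(z / b).re, ((eq_re_div_smul_add_im_div_smul hb z).trans (by simp [him])).symm⟩
    · rintro ⟨r, rfl⟩
      simp [real_smul, hb]
  · refine .inr (.inl ⟨b, a • (I * b), linearIndependent_pair_smul_I_mul hb ha,
      Set.ext fun z => ?_⟩)
    constructor
    · intro hz
      obtain ⟨n, hn⟩ := AddSubgroup.mem_zmultiples_iff.1 (hSa ▸ (hmem z).1 hz)
      refine ⟨(z / b).re, n, ?_⟩
      rw [← smul_assoc, hn]
      exact eq_re_div_smul_add_im_div_smul hb z
    · rintro ⟨r, n, rfl⟩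
      have ha : a • (I * b) ∈ H := (hSa ▸ AddSubgroup.mem_zmultiples a : a ∈ S)
      exact add_mem (hline r) (zsmul_mem ha n)

end Complex

/-- Classification of the closed additive subgroups of `ℂ ≅ ℝ²`: every closed additive
subgroup `H` of `ℂ` is `{0}`, infinite cyclic `ℤ b` with `b ≠ 0`, a line `ℝ b` with
`b ≠ 0`, a lattice `ℤ b₁ + ℤ b₂` with `b₁, b₂` `ℝ`-linearly independent,
`ℝ b₁ + ℤ b₂` with `b₁, b₂` independent, or all of `ℂ`. In particular, if `H` is
discrete then it is `{0}`, `ℤ b`, or a lattice. -/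
theorem stmt16 (H : AddSubgroup ℂ) (hH : IsClosed (H : Set ℂ)) :
    ((H : Set ℂ) = {0} ∨
     (∃ b : ℂ, b ≠ 0 ∧ (H : Set ℂ) = Set.range fun n : ℤ => n • b) ∨
     (∃ b : ℂ, b ≠ 0 ∧ (H : Set ℂ) = Set.range fun r : ℝ => r • b) ∨
     (∃ b₁ b₂ : ℂ, LinearIndependent ℝ ![b₁, b₂] ∧
        (H : Set ℂ) = {w : ℂ | ∃ m n : ℤ, w = m • b₁ + n • b₂}) ∨
     (∃ b₁ b₂ : ℂ, LinearIndependent ℝ ![b₁, b₂] ∧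
        (H : Set ℂ) = {w : ℂ | ∃ (r : ℝ) (n : ℤ), w = r • b₁ + n • b₂}) ∨
     (H : Set ℂ) = Set.univ) ∧
    (DiscreteTopology H →
      ((H : Set ℂ) = {0} ∨
       (∃ b : ℂ, b ≠ 0 ∧ (H : Set ℂ) = Set.range fun n : ℤ => n • b) ∨
       (∃ b₁ b₂ : ℂ, LinearIndependent ℝ ![b₁, b₂] ∧
          (H : Set ℂ) = {w : ℂ | ∃ m n : ℤ, w = m • b₁ + n • b₂}))) := by
  refine ⟨?_, fun _ => addSubgroup_eq_zero_or_zmultiples_or_lattice_of_discreteTopology H⟩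
  by_cases hd : DiscreteTopology H
  · rcases addSubgroup_eq_zero_or_zmultiples_or_lattice_of_discreteTopology H with h | h | h
    · exact .inl h
    · exact .inr (.inl h)
    · exact .inr (.inr (.inr (.inl h)))
  · obtain ⟨u, hu, hline⟩ := H.exists_forall_smul_mem_of_not_discreteTopology hH hd
    rcases addSubgroup_eq_line_or_eq_line_add_zmultiples_or_eq_univ hH hu hline with h | h | h
    · exact .inr (.inr (.inl h))
    · exact .inr (.inr (.inr (.inr (.inl h))))
    · exact .inr (.inr (.inr (.inr (.inr h))))
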